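/- Strict monotonicity of apparent resistivity in the spacing-to-depth ratio: for fixed ρ, i, h > 0, the normalized correction a·S(a,h) = a·Σ_{n≥1}[1/√(a²+4n²h²) − 1/√(4a²+4n²h²)] is strictly increasing in a on (0, ∞). -/
import Mathlib


/-- The `n`-th term of the apparent-resistivity series. -/
noncomputable def wennerTerm (a h : ℝ) (n : ℕ) : ℝ :=
  1 / Real.sqrt (a ^ 2 + 4 * (n : ℝ) ^ 2 * h ^ 2)
    - 1 / Real.sqrt (4 * a ^ 2 + 4 * (n : ℝ) ^ 2 * h ^ 2)

/-- The apparent-resistivity series correction `S(a,h)`. -/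
noncomputable def wennerS (a h : ℝ) : ℝ := ∑' n : ℕ, wennerTerm a h (n + 1)

set_option maxHeartbeats 800000

/-- Two-point strict inequality for a single term, in normalized form. -/
lemma term_lt {a b c : ℝ} (ha : 0 < a) (hab : a < b) (hc : 0 < c) :
    a / Real.sqrt (a^2 + c) - a / Real.sqrt (4*a^2 + c)
      < b / Real.sqrt (b^2 + c) - b / Real.sqrt (4*b^2 + c) := by
  have hb : 0 < b := ha.trans hab
  set p := Real.sqrt (a^2 + c) with hpdef
  set q := Real.sqrt (4*a^2 + c) with hqdef
  set r := Real.sqrt (b^2 + c) with hrdef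
  set s := Real.sqrt (4*b^2 + c) with hsdef
  have hp : 0 < p := Real.sqrt_pos.mpr (by positivity)
  have hq : 0 < q := Real.sqrt_pos.mpr (by positivity)
  have hr : 0 < r := Real.sqrt_pos.mpr (by positivity)
  have hs : 0 < s := Real.sqrt_pos.mpr (by positivity)
  have hp2 : p^2 = a^2 + c := Real.sq_sqrt (by positivity)
  have hq2 : q^2 = 4*a^2 + c := Real.sq_sqrt (by positivity)
  have hr2 : r^2 = b^2 + c := Real.sq_sqrt (by positivity)
  have hs2 : s^2 = 4*b^2 + c := Real.sq_sqrt (by positivity)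
  -- key polynomial inequalities
  have hab2 : a^2 < b^2 := by nlinarith
  have h1 : a^2*(b^2+c) < b^2*(a^2+c) := by nlinarith [mul_pos hc (sub_pos.mpr hab2)]
  have h2 : a^2*(4*b^2+c) < b^2*(4*a^2+c) := by nlinarith [mul_pos hc (sub_pos.mpr hab2)]
  have k1 : a^3*(b^2+c)*s < b^3*(a^2+c)*q := by
    apply lt_of_pow_lt_pow_left₀ 2 (by positivity)
    have e1 : (a^3*(b^2+c)*s)^2 = (a^2*(b^2+c))^2 * (a^2*s^2) := by ring
    have e2 : (b^3*(a^2+c)*q)^2 = (b^2*(a^2+c))^2 * (b^2*q^2) := by ring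
    rw [e1, e2, hs2, hq2]
    apply mul_lt_mul'' (pow_lt_pow_left₀ h1 (by positivity) (by norm_num))
      (by nlinarith) (by positivity) (by positivity)
  have k2 : a^3*(4*b^2+c)*r < b^3*(4*a^2+c)*p := by
    apply lt_of_pow_lt_pow_left₀ 2 (by positivity)
    have e1 : (a^3*(4*b^2+c)*r)^2 = (a^2*(4*b^2+c))^2 * (a^2*r^2) := by ring
    have e2 : (b^3*(4*a^2+c)*p)^2 = (b^2*(4*a^2+c))^2 * (b^2*p^2) := by ring
    rw [e1, e2, hr2, hp2]
    apply mul_lt_mul'' (pow_lt_pow_left₀ h2 (by positivity) (by norm_num))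
      (by nlinarith) (by positivity) (by positivity)
  have ea : a/p - a/q = 3*a^3 / (p*q*(p+q)) := by
    rw [div_sub_div _ _ hp.ne' hq.ne', div_eq_div_iff (by positivity) (by positivity)]
    linear_combination (a*q*p)*hq2 - (a*q*p)*hp2
  have eb : b/r - b/s = 3*b^3 / (r*s*(r+s)) := by
    rw [div_sub_div _ _ hr.ne' hs.ne', div_eq_div_iff (by positivity) (by positivity)]
    linear_combination (b*s*r)*hs2 - (b*s*r)*hr2
  rw [ea, eb, div_lt_div_iff₀ (by positivity) (by positivity)]
  have er : r*s*(r+s) = (b^2+c)*s + (4*b^2+c)*r := by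
    linear_combination s*hr2 + r*hs2
  have ep : p*q*(p+q) = (a^2+c)*q + (4*a^2+c)*p := by
    linear_combination q*hp2 + p*hq2
  rw [er, ep]
  nlinarith [k1, k2]

lemma wennerTerm_eq (a h : ℝ) (n : ℕ) :
    a * wennerTerm a h n
      = a / Real.sqrt (a^2 + 4*(n:ℝ)^2*h^2) - a / Real.sqrt (4*a^2 + 4*(n:ℝ)^2*h^2) := by
  rw [wennerTerm]; ring

lemma summable_wenner {a h : ℝ} (ha : 0 < a) (hh : 0 < h) :
    Summable (fun n : ℕ => wennerTerm a h (n + 1)) := by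
  have hsum : Summable (fun n : ℕ => 3*a^2/(16*h^3) * (1/((n:ℝ)+1)^3)) := by
    apply Summable.mul_left
    have h0 : Summable (fun n : ℕ => 1/((n:ℝ))^3) :=
      Real.summable_one_div_nat_pow.mpr (by norm_num)
    have := (summable_nat_add_iff 1).mpr h0
    refine this.congr fun n => ?_
    push_cast
    ring
  apply Summable.of_nonneg_of_le _ _ hsum
  · intro n
    rw [wennerTerm]
    have hle : Real.sqrt (a^2 + 4*((n:ℝ)+1)^2*h^2) ≤ Real.sqrt (4*a^2 + 4*((n:ℝ)+1)^2*h^2) := by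
      apply Real.sqrt_le_sqrt; nlinarith
    push_cast
    have h1 : 0 < Real.sqrt (a^2 + 4*((n:ℝ)+1)^2*h^2) := Real.sqrt_pos.mpr (by positivity)
    have := one_div_le_one_div_of_le h1 hle
    linarith
  · intro n
    set m : ℝ := (n:ℝ) + 1 with hm
    have hm1 : (1:ℝ) ≤ m := by simp [hm]
    have hm0 : 0 < m := by linarith
    rw [wennerTerm]
    push_cast
    set p := Real.sqrt (a^2 + 4*m^2*h^2) with hpdef
    set q := Real.sqrt (4*a^2 + 4*m^2*h^2) with hqdef
    have hp : 0 < p := Real.sqrt_pos.mpr (by positivity)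
    have hq : 0 < q := Real.sqrt_pos.mpr (by positivity)
    have hp2 : p^2 = a^2 + 4*m^2*h^2 := Real.sq_sqrt (by positivity)
    have hq2 : q^2 = 4*a^2 + 4*m^2*h^2 := Real.sq_sqrt (by positivity)
    have hpl : 2*m*h ≤ p := by
      rw [hpdef, show 2*m*h = Real.sqrt ((2*m*h)^2) from (Real.sqrt_sq (by positivity)).symm]
      apply Real.sqrt_le_sqrt; nlinarith
    have hql : 2*m*h ≤ q := by
      rw [hqdef, show 2*m*h = Real.sqrt ((2*m*h)^2) from (Real.sqrt_sq (by positivity)).symm]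
      apply Real.sqrt_le_sqrt; nlinarith
    have key : 1/p - 1/q = 3*a^2 / (p*q*(p+q)) := by
      rw [div_sub_div _ _ hp.ne' hq.ne', div_eq_div_iff (by positivity) (by positivity)]
      linear_combination (q*p)*hq2 - (q*p)*hp2
    rw [key]
    have hD : 16*m^3*h^3 ≤ p*q*(p+q) := by
      have : (2*m*h)*(2*m*h)*((2*m*h)+(2*m*h)) ≤ p*q*(p+q) := by
        apply mul_le_mul
        · exact mul_le_mul hpl hql (by positivity) hp.le
        · linarith
        · positivity
        · positivity
      nlinarith [this]
    calc 3*a^2 / (p*q*(p+q)) ≤ 3*a^2 / (16*m^3*h^3) := by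
          apply div_le_div_of_nonneg_left (by positivity) (by positivity) hD
      _ = 3*a^2/(16*h^3) * (1/m^3) := by field_simp
      _ ≤ 3*a^2/(16*h^3) * (1/m^3) := le_refl _

/-- For fixed `h > 0`, the normalized correction `a·S(a,h)` is strictly
increasing in the spacing `a` on `(0,∞)`. -/
theorem normalized_correction_strictMono (h : ℝ) (hh : 0 < h) :
    StrictMonoOn (fun a : ℝ => a * wennerS a h) (Set.Ioi 0) := by
  intro a ha b hb hab
  simp only [Set.mem_Ioi] at ha hb
  simp only [wennerS, ← tsum_mul_left]
  have hc : ∀ n : ℕ, (0:ℝ) < 4*((n:ℝ)+1)^2*h^2 := fun n => by positivity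
  have hlt : ∀ n : ℕ, a * wennerTerm a h (n+1) < b * wennerTerm b h (n+1) := by
    intro n
    rw [wennerTerm_eq, wennerTerm_eq]
    push_cast
    exact term_lt ha hab (hc n)
  exact Summable.tsum_lt_tsum (fun n => (hlt n).le) (hlt 0)
    ((summable_wenner ha hh).mul_left a) ((summable_wenner hb hh).mul_left b)
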